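/- Let P be a real symmetric positive definite n×n matrix, Ω a real symmetric n×n matrix, λ ∈ (0,1), N = λ·I + Ω P Ω, P' = (1/λ)·(P − P Ω N⁻¹ Ω P), and for θ̃ ∈ ℝⁿ let θ̃' = (I − P Ω N⁻¹ Ω)·θ̃. Then the Lyapunov function V = θ̃ᵀ P⁻¹ θ̃ satisfies the one-step decrease θ̃'ᵀ (P')⁻¹ θ̃' ≤ λ · θ̃ᵀ P⁻¹ θ̃. -/

import Mathlib

open Matrix

open scoped ComplexOrder

/-! With `A = P Ω N⁻¹ Ω`, a direct computation using `N = λ I + Ω P Ω` gives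
`(λ P⁻¹ + Ω²)(I − A) = λ P⁻¹`. Multiplying on the right by `P` shows that `λ P⁻¹ + Ω²` is the
inverse of `P' = λ⁻¹ (I − A) P` (Woodbury), and the same identity turns the new Lyapunov value
into `λ (V − uᵀ N⁻¹ u)` with `u = Ω θ̃`; the subtracted term is nonnegative since `N` is
positive definite. -/

namespace Matrix

variable {m : Type*} [Fintype m]

theorem IsSymm.mulVec_dotProduct {R : Type*} [CommSemiring R] {A : Matrix m m R}
    (hA : A.IsSymm) (v w : m → R) : (A *ᵥ v) ⬝ᵥ w = v ⬝ᵥ (A *ᵥ w) := by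
  rw [dotProduct_comm, ← dotProduct_transpose_mulVec, hA.eq]

variable [DecidableEq m]

theorem posDef_smul_one_add_conjTranspose_mul_mul {𝕜 : Type*} [RCLike 𝕜] {c : ℝ} (hc : 0 < c)
    {P : Matrix m m 𝕜} (hP : P.PosSemidef) (Ω : Matrix m m 𝕜) :
    (c • (1 : Matrix m m 𝕜) + Ωᴴ * P * Ω).PosDef :=
  (PosDef.one.smul hc).add_posSemidef (hP.conjTranspose_mul_mul_same Ω)

section Gain

variable {R : Type*} [CommRing R] {P Ω N : Matrix m m R} {c : R}

theorem smul_inv_add_mul_mul_one_sub_gain (hP : IsUnit P.det) (hN : IsUnit N.det)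
    (hNdef : N = c • 1 + Ω * P * Ω) :
    (c • P⁻¹ + Ω * Ω) * (1 - P * Ω * N⁻¹ * Ω) = c • P⁻¹ := by
  have hΩN : c • Ω + Ω * Ω * P * Ω = Ω * N := by
    rw [hNdef, Matrix.mul_add, Matrix.mul_smul, Matrix.mul_one]; simp only [Matrix.mul_assoc]
  have hcancel : c • P⁻¹ * (P * Ω * N⁻¹ * Ω) + Ω * Ω * (P * Ω * N⁻¹ * Ω) = Ω * Ω :=
    calc c • P⁻¹ * (P * Ω * N⁻¹ * Ω) + Ω * Ω * (P * Ω * N⁻¹ * Ω)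
        = (c • Ω + Ω * Ω * P * Ω) * N⁻¹ * Ω := by
          simp only [Matrix.add_mul, Matrix.smul_mul, ← Matrix.mul_assoc, nonsing_inv_mul P hP,
            Matrix.one_mul]
      _ = Ω * Ω := by
          rw [hΩN, Matrix.mul_assoc Ω, mul_nonsing_inv N hN, Matrix.mul_one]
  rw [Matrix.mul_sub, Matrix.mul_one, Matrix.add_mul _ _ (P * Ω * N⁻¹ * Ω), hcancel,
    add_sub_cancel_right]

theorem gain_mulVec_dotProduct_inv_mulVec (hPs : P.IsSymm) (hΩs : Ω.IsSymm) (hP : IsUnit P.det)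
    (θ : m → R) :
    ((P * Ω * N⁻¹ * Ω) *ᵥ θ) ⬝ᵥ (P⁻¹ *ᵥ θ) = (Ω *ᵥ θ) ⬝ᵥ (N⁻¹ *ᵥ (Ω *ᵥ θ)) := by
  rw [Matrix.mul_assoc, Matrix.mul_assoc, ← mulVec_mulVec, hPs.mulVec_dotProduct,
    mulVec_mulVec, mul_nonsing_inv P hP, one_mulVec, ← mulVec_mulVec, ← mulVec_mulVec,
    hΩs.mulVec_dotProduct, dotProduct_comm]

theorem dotProduct_mulVec_one_sub_gain (hPs : P.IsSymm) (hΩs : Ω.IsSymm) (hP : IsUnit P.det)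
    (hN : IsUnit N.det) (hNdef : N = c • 1 + Ω * P * Ω) (θ : m → R) :
    ((1 - P * Ω * N⁻¹ * Ω) *ᵥ θ) ⬝ᵥ ((c • P⁻¹ + Ω * Ω) *ᵥ ((1 - P * Ω * N⁻¹ * Ω) *ᵥ θ)) =
      c * (θ ⬝ᵥ (P⁻¹ *ᵥ θ) - (Ω *ᵥ θ) ⬝ᵥ (N⁻¹ *ᵥ (Ω *ᵥ θ))) := by
  rw [mulVec_mulVec, smul_inv_add_mul_mul_one_sub_gain hP hN hNdef, smul_mulVec, dotProduct_smul,
    sub_mulVec, one_mulVec, sub_dotProduct, gain_mulVec_dotProduct_inv_mulVec hPs hΩs hP,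
    smul_eq_mul]

end Gain

theorem inv_smul_sub_gain_mul {K : Type*} [Field K] {P Ω N : Matrix m m K} {c : K} (hc : c ≠ 0)
    (hP : IsUnit P.det) (hN : IsUnit N.det) (hNdef : N = c • 1 + Ω * P * Ω) :
    (c⁻¹ • (P - P * Ω * N⁻¹ * Ω * P))⁻¹ = c • P⁻¹ + Ω * Ω := by
  have hfactor : P - P * Ω * N⁻¹ * Ω * P = (1 - P * Ω * N⁻¹ * Ω) * P := by
    rw [Matrix.sub_mul, Matrix.one_mul]
  refine inv_eq_left_inv ?_
  rw [hfactor, Matrix.mul_smul, ← Matrix.mul_assoc,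
    smul_inv_add_mul_mul_one_sub_gain hP hN hNdef, Matrix.smul_mul, nonsing_inv_mul P hP,
    smul_smul, inv_mul_cancel₀ hc, one_smul]

end Matrix

theorem lyapunov_decrease_general {n : ℕ} (P Ω : Matrix (Fin n) (Fin n) ℝ)
    (hP : P.PosDef) (hΩ : Ω.IsHermitian) (lam : ℝ) (hlam0 : 0 < lam)
    (N P' : Matrix (Fin n) (Fin n) ℝ)
    (hN : N = lam • (1 : Matrix (Fin n) (Fin n) ℝ) + Ω * P * Ω)
    (hP' : P' = lam⁻¹ • (P - P * Ω * N⁻¹ * Ω * P))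
    (θtil θtil' : Fin n → ℝ)
    (hθ : θtil' = ((1 : Matrix (Fin n) (Fin n) ℝ) - P * Ω * N⁻¹ * Ω) *ᵥ θtil) :
    θtil' ⬝ᵥ (P'⁻¹ *ᵥ θtil') ≤ lam * (θtil ⬝ᵥ (P⁻¹ *ᵥ θtil)) := by
  have hNpd : N.PosDef := by
    simpa only [hΩ.eq, ← hN] using
      posDef_smul_one_add_conjTranspose_mul_mul hlam0 hP.posSemidef Ω
  have hPu : IsUnit P.det := (isUnit_iff_isUnit_det P).mp hP.isUnit
  have hNu : IsUnit N.det := (isUnit_iff_isUnit_det N).mp hNpd.isUnit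
  have hcross : 0 ≤ (Ω *ᵥ θtil) ⬝ᵥ (N⁻¹ *ᵥ (Ω *ᵥ θtil)) := by
    simpa only [star_trivial] using hNpd.posSemidef.inv.dotProduct_mulVec_nonneg (Ω *ᵥ θtil)
  rw [hP', inv_smul_sub_gain_mul hlam0.ne' hPu hNu hN, hθ,
    dotProduct_mulVec_one_sub_gain (isHermitian_iff_isSymm.mp hP.isHermitian)
      (isHermitian_iff_isSymm.mp hΩ) hPu hNu hN]
  exact mul_le_mul_of_nonneg_left (sub_le_self _ hcross) hlam0.le

/-- One-step decrease of the Lyapunov function `V = θ̃ᵀ P⁻¹ θ̃` along the proposed RLS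
update: with `N = λ I + Ω P Ω`, `P' = (1/λ)(P − P Ω N⁻¹ Ω P)` and
`θ̃' = (I − P Ω N⁻¹ Ω) θ̃`, one has `θ̃'ᵀ (P')⁻¹ θ̃' ≤ λ θ̃ᵀ P⁻¹ θ̃`. -/
theorem lyapunov_decrease {n : ℕ} (P Ω : Matrix (Fin n) (Fin n) ℝ)
    (hP : P.PosDef) (hΩ : Ω.IsHermitian) (lam : ℝ) (hlam0 : 0 < lam) (hlam1 : lam < 1)
    (N P' : Matrix (Fin n) (Fin n) ℝ)
    (hN : N = lam • (1 : Matrix (Fin n) (Fin n) ℝ) + Ω * P * Ω)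
    (hP' : P' = lam⁻¹ • (P - P * Ω * N⁻¹ * Ω * P))
    (θtil θtil' : Fin n → ℝ)
    (hθ : θtil' = ((1 : Matrix (Fin n) (Fin n) ℝ) - P * Ω * N⁻¹ * Ω) *ᵥ θtil) :
    θtil' ⬝ᵥ (P'⁻¹ *ᵥ θtil') ≤ lam * (θtil ⬝ᵥ (P⁻¹ *ᵥ θtil)) :=
  lyapunov_decrease_general P Ω hP hΩ lam hlam0 N P' hN hP' θtil θtil' hθ
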